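/- Let α₁, α₂ > 0 be real numbers with 2(α₁ − α₂) ≥ π·e. Let p : ℂ → ℂ be analytic on the open unit disk 𝔻 with p(0) = 1, and suppose there exists an analytic function ω : 𝔻 → ℂ with ω(0) = 0 and |ω(z)| < 1 for all z ∈ 𝔻 such that 1 + α₁·z·p'(z) + α₂·z²·p''(z) = 1 + Log(ω(z) + (1 + ω(z)²)^{1/2}) for all z ∈ 𝔻, where the square root and Log are the principal branches. Then for every z ∈ 𝔻, |Log(p(z))| < 1. -/

import Mathlib

/-! For `‖w‖ < 1` put `ξ = w + √(1 + w²)`. Then `ξ⁻¹ = √(1 + w²) - w`, so `Re ξ ≥ 0` because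
`Re (ξ + ξ⁻¹) ≥ 0`, and `‖ξ‖, ‖ξ⁻¹‖ < 5/2 < e` because `‖√(1 + w²)‖ < 3/2`; this gives
`‖sinh⁻¹ w‖ < 2`. Hence `G = α₁ z p' + α₂ z² p''` satisfies `‖G‖ < 2` on the disk, and the
Schwarz lemma applied to `G / z = α₁ p' + α₂ z p''` bounds that by `2`. Integrating this Euler
equation along rays against the factor `s ^ (α₁ / α₂)` gives `‖p'‖ ≤ 2 / α₁ < 1/2`, since
`α₁ > α₂ + πe/2 > 4`. So `‖p - 1‖ < 1/2`, and `‖log p‖ ≤ 3/2 ‖p - 1‖ < 1`. -/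

open Complex Metric Set

namespace Complex

noncomputable def arsinh (w : ℂ) : ℂ := log (w + (1 + w ^ 2) ^ (1 / 2 : ℂ))

lemma re_nonneg_of_re_add_inv_nonneg {ξ : ℂ} (h : 0 ≤ (ξ + ξ⁻¹).re) : 0 ≤ ξ.re := by
  rw [add_re, inv_re] at h
  by_contra! hneg
  have : ξ.re / normSq ξ ≤ 0 := div_nonpos_of_nonpos_of_nonneg hneg.le (normSq_nonneg ξ)
  linarith

lemma norm_log_lt_two {ξ : ℂ} (hre : 0 ≤ ξ.re) (hlog : |Real.log ‖ξ‖| < 1) : ‖log ξ‖ < 2 := by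
  have harg : |arg ξ| ≤ Real.pi / 2 := abs_arg_le_pi_div_two_iff.mpr hre
  have hsq : ‖log ξ‖ ^ 2 < 2 ^ 2 := by
    rw [Complex.sq_norm, normSq_apply, log_re, log_im]
    have h1 : Real.log ‖ξ‖ * Real.log ‖ξ‖ < 1 := by
      nlinarith [abs_mul_abs_self (Real.log ‖ξ‖), abs_nonneg (Real.log ‖ξ‖)]
    have h2 : arg ξ * arg ξ ≤ (Real.pi / 2) ^ 2 := by
      nlinarith [abs_mul_abs_self (arg ξ), abs_nonneg (arg ξ)]
    have hπ : (Real.pi / 2) ^ 2 < 3 := by nlinarith [Real.pi_lt_d2, Real.pi_pos]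
    linarith
  exact lt_of_pow_lt_pow_left₀ 2 zero_le_two hsq

lemma abs_log_norm_lt_one {ξ : ℂ} (hξ : ‖ξ‖ < Real.exp 1) (hξ' : ‖ξ⁻¹‖ < Real.exp 1) :
    |Real.log ‖ξ‖| < 1 := by
  rcases (norm_nonneg ξ).eq_or_lt with h | hpos
  · simp [← h]
  rw [norm_inv] at hξ'
  rw [abs_lt, neg_lt, ← Real.log_inv]
  exact ⟨(Real.log_lt_iff_lt_exp (inv_pos.mpr hpos)).mpr hξ', (Real.log_lt_iff_lt_exp hpos).mpr hξ⟩

lemma norm_arsinh_lt_two {w : ℂ} (hw : ‖w‖ < 1) : ‖arsinh w‖ < 2 := by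
  rw [arsinh, one_div]
  set s := (1 + w ^ 2) ^ (2⁻¹ : ℂ)
  have hs_sq : s ^ 2 = 1 + w ^ 2 := cpow_ofNat_inv_pow _ 2
  have hs_re : 0 ≤ s.re := by
    rw [cpow_inv_two_re]; exact Real.sqrt_nonneg _
  have hs_norm : ‖s‖ < 3 / 2 := by
    have : ‖s‖ ^ 2 < 2 := by
      rw [← norm_pow, hs_sq]
      calc ‖1 + w ^ 2‖ ≤ 1 + ‖w‖ ^ 2 := (norm_add_le _ _).trans_eq (by rw [norm_one, norm_pow])
        _ < 2 := by nlinarith [norm_nonneg w]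
    nlinarith [norm_nonneg s]
  have hinv : (w + s)⁻¹ = s - w := inv_eq_of_mul_eq_one_right (by linear_combination hs_sq)
  have he := Real.exp_one_gt_d9
  apply norm_log_lt_two
  · apply re_nonneg_of_re_add_inv_nonneg
    rw [hinv, add_re, add_re, sub_re]; linarith
  · apply abs_log_norm_lt_one
    · linarith [norm_add_le w s]
    · rw [hinv]; linarith [norm_sub_le s w]

end Complex

lemma norm_le_div_of_norm_mul_lt {H : ℂ → ℂ} {R M : ℝ} (hH : DifferentiableOn ℂ H (ball 0 R))
    (hM : ∀ w ∈ ball (0 : ℂ) R, ‖w * H w‖ < M) {w : ℂ} (hw : w ∈ ball 0 R) :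
    ‖H w‖ ≤ M / R := by
  set G : ℂ → ℂ := fun w => (w - 0) • H w
  have hG : DifferentiableOn ℂ G (ball 0 R) :=
    (differentiableOn_id.sub_const 0).smul hH
  have hmaps : MapsTo G (ball 0 R) (closedBall (G 0) M) := fun v hv => by
    simpa [G] using (hM v hv).le
  have hdslope : dslope G 0 w = H w := by
    rcases eq_or_ne w 0 with rfl | hne
    · rw [dslope_same]
      have hd : HasDerivAt G ((0 - 0 : ℂ) • deriv H 0 + (1 : ℂ) • H 0) 0 :=
        ((hasDerivAt_id (0 : ℂ)).sub_const 0).smul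
          (hH.differentiableAt (isOpen_ball.mem_nhds hw)).hasDerivAt
      rw [hd.deriv]; simp
    · exact dslope_sub_smul_of_ne H hne
  simpa [hdslope] using Complex.norm_dslope_le_div_of_mapsTo_ball hG hmaps hw

lemma ofReal_mul_mem_ball_of_mem_Icc {R s : ℝ} {z : ℂ} (hz : z ∈ ball (0 : ℂ) R)
    (hs : s ∈ Icc (0 : ℝ) 1) : (s : ℂ) * z ∈ ball (0 : ℂ) R := by
  rw [← real_smul]
  exact (convex_ball (0 : ℂ) R).starConvex (mem_ball_self (pos_of_mem_ball hz)) |>.smul_mem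
    hz hs.1 hs.2

lemma hasDerivAt_rpow_mul_comp_ray {γ : ℝ} (hγ : 1 ≤ γ) {h : ℂ → ℂ} {z : ℂ} {s : ℝ}
    (hs : 0 ≤ s) (hd : DifferentiableAt ℂ h (s * z)) :
    HasDerivAt (fun t : ℝ => ((t ^ γ : ℝ) : ℂ) * h (t * z))
      (((s ^ (γ - 1) : ℝ) : ℂ) * (γ * h (s * z) + s * z * deriv h (s * z))) s := by
  have hpow := (Real.hasDerivAt_rpow_const (x := s) (Or.inr hγ)).ofReal_comp
  have hray : HasDerivAt (fun t : ℝ => h (t * z)) (deriv h (s * z) * z) s :=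
    (hd.hasDerivAt.comp (s : ℂ) (hasDerivAt_mul_const z)).comp_ofReal
  have hsγ : s ^ γ = s ^ (γ - 1) * s := by
    rw [← Real.rpow_add_one' hs (by linarith), sub_add_cancel]
  refine (hpow.mul hray).congr_deriv ?_
  simp only [hsγ]
  push_cast
  ring

lemma norm_le_div_of_norm_euler_le {a b M R : ℝ} {h : ℂ → ℂ} (hb : 0 < b) (hba : b ≤ a)
    (hh : DifferentiableOn ℂ h (ball 0 R))
    (hM : ∀ w ∈ ball (0 : ℂ) R, ‖a * h w + b * w * deriv h w‖ ≤ M) {z : ℂ}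
    (hz : z ∈ ball (0 : ℂ) R) : ‖h z‖ ≤ M / a := by
  set γ := a / b
  have hγ : 1 ≤ γ := (one_le_div hb).mpr hba
  have ha : a = γ * b := (div_mul_cancel₀ a hb.ne').symm
  have hφ : ∀ s ∈ Icc (0 : ℝ) 1, HasDerivAt (fun t : ℝ => ((t ^ γ : ℝ) : ℂ) * h (t * z))
      (((s ^ (γ - 1) : ℝ) : ℂ) * (γ * h (s * z) + s * z * deriv h (s * z))) s := fun s hs =>
    hasDerivAt_rpow_mul_comp_ray hγ hs.1 <|
      hh.differentiableAt (isOpen_ball.mem_nhds (ofReal_mul_mem_ball_of_mem_Icc hz hs))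
  have hB : ∀ s, HasDerivAt (fun t : ℝ => M / a * t ^ γ) (M / a * (γ * s ^ (γ - 1))) s :=
    fun s => (Real.hasDerivAt_rpow_const (Or.inr hγ)).const_mul _
  have hbound : ∀ s ∈ Ico (0 : ℝ) 1,
      ‖((s ^ (γ - 1) : ℝ) : ℂ) * (γ * h (s * z) + s * z * deriv h (s * z))‖
        ≤ M / a * (γ * s ^ (γ - 1)) := by
    intro s hs
    have hpos : 0 ≤ s ^ (γ - 1) := Real.rpow_nonneg hs.1 _
    have hE := hM _ (ofReal_mul_mem_ball_of_mem_Icc hz (Ico_subset_Icc_self hs))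
    rw [show (a : ℂ) * h (s * z) + b * (s * z) * deriv h (s * z)
        = b * (γ * h (s * z) + s * z * deriv h (s * z)) by rw [ha]; push_cast; ring,
      norm_mul, norm_real, Real.norm_of_nonneg hb.le] at hE
    rw [norm_mul, norm_real, Real.norm_of_nonneg hpos]
    calc _ ≤ s ^ (γ - 1) * (M / b) := by gcongr; rwa [le_div_iff₀' hb]
      _ = M / a * (γ * s ^ (γ - 1)) := by rw [ha]; field_simp
  have hφ0 : ‖((0 ^ γ : ℝ) : ℂ) * h (0 * z)‖ ≤ M / a * 0 ^ γ := by
    simp [Real.zero_rpow (by linarith : γ ≠ 0)]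
  simpa using image_norm_le_of_norm_deriv_right_le_deriv_boundary
    (fun s hs => (hφ s hs).continuousAt.continuousWithinAt)
    (fun s hs => (hφ s (Ico_subset_Icc_self hs)).hasDerivWithinAt) hφ0 hB hbound
    (right_mem_Icc.mpr zero_le_one)

theorem subordination_arcsinh_general (α₁ α₂ : ℝ) (h₂ : 0 < α₂)
    (hcond : 2 * (α₁ - α₂) ≥ Real.pi * Real.exp 1)
    (p : ℂ → ℂ) (hp : DifferentiableOn ℂ p (Metric.ball (0:ℂ) 1)) (hp0 : p 0 = 1)
    (hsub : ∃ ω : ℂ → ℂ, DifferentiableOn ℂ ω (Metric.ball (0:ℂ) 1) ∧ ω 0 = 0 ∧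
      (∀ z ∈ Metric.ball (0:ℂ) 1, ‖ω z‖ < 1) ∧
      ∀ z ∈ Metric.ball (0:ℂ) 1,
        1 + α₁ * z * deriv p z + α₂ * z^2 * deriv (deriv p) z =
          1 + Complex.log (ω z + (1 + (ω z)^2) ^ (1/2 : ℂ))) :
    ∀ z ∈ Metric.ball (0:ℂ) 1, ‖Complex.log (p z)‖ < 1 := by
  obtain ⟨ω, -, -, hω_lt, hω_eq⟩ := hsub
  have hα : α₂ + 4 < α₁ := by nlinarith [Real.pi_gt_three, Real.exp_one_gt_d9]
  have hα₁ : 0 < α₁ := by linarith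
  have hp' := (hp.analyticOnNhd isOpen_ball).deriv
  have hp'' := hp'.deriv
  have hH : DifferentiableOn ℂ (fun w => α₁ * deriv p w + α₂ * w * deriv (deriv p) w)
      (ball 0 1) := (hp'.differentiableOn.const_mul _).add
    (((differentiableOn_const _).mul differentiableOn_id).mul hp''.differentiableOn)
  have hH_lt : ∀ w ∈ ball (0 : ℂ) 1,
      ‖w * (α₁ * deriv p w + α₂ * w * deriv (deriv p) w)‖ < 2 := fun w hw => by
    rw [show w * (α₁ * deriv p w + α₂ * w * deriv (deriv p) w) = arsinh (ω w) by
      rw [arsinh]; linear_combination hω_eq w hw]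
    exact norm_arsinh_lt_two (hω_lt w hw)
  have hEuler : ∀ w ∈ ball (0 : ℂ) 1, ‖α₁ * deriv p w + α₂ * w * deriv (deriv p) w‖ ≤ 2 :=
    fun w hw => by simpa using norm_le_div_of_norm_mul_lt hH hH_lt hw
  have hderiv : ∀ w ∈ ball (0 : ℂ) 1, ‖deriv p w‖ ≤ 2 / α₁ := fun w hw =>
    norm_le_div_of_norm_euler_le h₂ (by linarith) hp'.differentiableOn hEuler hw
  intro z hz
  have hpz : ‖p z - 1‖ < 1 / 2 := by
    have hmvt := (convex_ball (0 : ℂ) 1).norm_image_sub_le_of_norm_deriv_le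
      (fun w hw => hp.differentiableAt (isOpen_ball.mem_nhds hw)) hderiv
      (mem_ball_self one_pos) hz
    rw [hp0, sub_zero] at hmvt
    have hz1 : ‖z‖ < 1 := mem_ball_zero_iff.mp hz
    calc ‖p z - 1‖ ≤ 2 / α₁ * ‖z‖ := hmvt
      _ ≤ 2 / α₁ := mul_le_of_le_one_right (div_pos two_pos hα₁).le hz1.le
      _ < 1 / 2 := by rw [div_lt_div_iff₀ (by linarith) two_pos]; linarith
  calc ‖log (p z)‖ = ‖log (1 + (p z - 1))‖ := by rw [add_sub_cancel]
    _ ≤ 3 / 2 * ‖p z - 1‖ := norm_log_one_add_half_le_self hpz.le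
    _ < 1 := by linarith

theorem subordination_arcsinh (α₁ α₂ : ℝ) (h₁ : 0 < α₁) (h₂ : 0 < α₂)
    (hcond : 2 * (α₁ - α₂) ≥ Real.pi * Real.exp 1)
    (p : ℂ → ℂ) (hp : DifferentiableOn ℂ p (Metric.ball (0:ℂ) 1)) (hp0 : p 0 = 1)
    (hsub : ∃ ω : ℂ → ℂ, DifferentiableOn ℂ ω (Metric.ball (0:ℂ) 1) ∧ ω 0 = 0 ∧
      (∀ z ∈ Metric.ball (0:ℂ) 1, ‖ω z‖ < 1) ∧
      ∀ z ∈ Metric.ball (0:ℂ) 1,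
        1 + α₁ * z * deriv p z + α₂ * z^2 * deriv (deriv p) z =
          1 + Complex.log (ω z + (1 + (ω z)^2) ^ (1/2 : ℂ))) :
    ∀ z ∈ Metric.ball (0:ℂ) 1, ‖Complex.log (p z)‖ < 1 :=
  subordination_arcsinh_general α₁ α₂ h₂ hcond p hp hp0 hsub
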